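/- For n >= 3 and any 2 <= l <= n, the number of flattened ({l})-insertion parking functions of order n with exactly 2 runs equals sum_{i=0}^{n-3} 2^i * (n-1-i). -/

import Mathlib

/-!
A word with exactly two runs `A, B` is determined by the multiset `β` of letters of `B`: it is
`sort (s - β) ++ sort β`, where `s` is its multiset of letters, and conversely this word has two
runs iff it is not sorted, i.e. iff `β` is not the multiset of a suffix of `sort s`.
For `s = {1, …, n} + {l}` with `2 ≤ l`, the letter `1` occurs once and is the minimum, so the word
is flattened iff `1 ∉ β`, i.e. `β ≤ t := {2, …, n} + {l}`. Of the `3 · 2 ^ (n - 2)` sub-multisets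
of `t`, exactly `card t + 1 = n + 1` are suffixes of `sort t`, leaving
`3 · 2 ^ (n - 2) - (n + 1) = ∑_{i < n - 2} 2 ^ i (n - 1 - i)` words.
-/

namespace FlatPF

/-- Decomposition of a word into maximal weakly increasing runs. -/
def runs : List ℕ → List (List ℕ)
  | [] => []
  | a :: l =>
    match runs l with
    | [] => [[a]]
    | [] :: rs => [a] :: rs
    | (b :: t) :: rs => if a ≤ b then (a :: b :: t) :: rs else [a] :: (b :: t) :: rs

/-- The number of maximal weakly increasing runs of a word. -/
def numRuns (w : List ℕ) : ℕ := (runs w).length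

/-- A word is flattened if the leading values of its runs are weakly increasing. -/
def IsFlattened (w : List ℕ) : Prop :=
  List.Chain' (· ≤ ·) ((runs w).map (fun r => r.headD 0))

/-- A word is a parking function: entries in `[m]` and the weakly increasing
rearrangement `(a'_1, …, a'_m)` satisfies `a'_i ≤ i`. -/
def IsPF (w : List ℕ) : Prop :=
  (∀ x ∈ w, 1 ≤ x ∧ x ≤ w.length) ∧
  ∀ i < w.length, (w.mergeSort (· ≤ ·)).getD i 0 ≤ i + 1

/-- `w` is obtained by inserting the elements of the multiset `S` into some
permutation of `[n]`, keeping the letters of the permutation in relative order. -/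
def IsInsertion (S : Multiset ℕ) (n : ℕ) (w : List ℕ) : Prop :=
  (↑w : Multiset ℕ) = ↑(List.range' 1 n) + S ∧
  ∃ p : List ℕ, p.Perm (List.range' 1 n) ∧ p.Sublist w

/-- Flattened `S`-insertion parking functions of order `n`. -/
def flatIns (S : Multiset ℕ) (n : ℕ) : Set (List ℕ) :=
  {w | IsInsertion S n w ∧ IsFlattened w}

/-- Flattened `S`-insertion parking functions of order `n` with exactly `k` runs. -/
def flatInsK (S : Multiset ℕ) (n k : ℕ) : Set (List ℕ) :=
  {w | IsInsertion S n w ∧ IsFlattened w ∧ numRuns w = k}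

/-- `f(S; n, k)`, the number of flattened `S`-insertion parking functions of order `n`
with exactly `k` runs.  In particular `fS 0 n k` is the number of flattened
permutations of `[n]` with `k` runs. -/
noncomputable def fS (S : Multiset ℕ) (n k : ℕ) : ℕ := (flatInsK S n k).ncard


open Finset

section Runs

variable {w A B : List ℕ}

lemma pairwise_cons_cons_of_le {a b : ℕ} {u : List ℕ} (hab : a ≤ b)
    (h : (b :: u).Pairwise (· ≤ ·)) : (a :: b :: u).Pairwise (· ≤ ·) :=
  List.isChain_iff_pairwise.1 (.cons_cons hab (List.isChain_iff_pairwise.2 h))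

lemma flatten_runs (w : List ℕ) : (runs w).flatten = w := by
  induction w with
  | nil => rfl
  | cons a l ih =>
    rw [runs]
    split <;> rename_i h <;> rw [h] at ih
    · simp_all
    · simp_all
    · split <;> simp_all

lemma ne_nil_and_pairwise_of_mem_runs {r : List ℕ} (hr : r ∈ runs w) :
    r ≠ [] ∧ r.Pairwise (· ≤ ·) := by
  induction w generalizing r with
  | nil => simp [runs] at hr
  | cons a l ih =>
    rw [runs] at hr
    split at hr <;> rename_i h <;> simp only [h] at ih
    · simp_all
    · exact absurd rfl (ih List.mem_cons_self).1
    · split at hr <;> rename_i hab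
      · rcases List.mem_cons.1 hr with rfl | hr
        · exact ⟨List.cons_ne_nil _ _, pairwise_cons_cons_of_le hab (ih List.mem_cons_self).2⟩
        · exact ih (List.mem_cons_of_mem _ hr)
      · rcases List.mem_cons.1 hr with rfl | hr
        · simp
        · exact ih hr

lemma isChain_runs (w : List ℕ) :
    (runs w).IsChain (fun r s => ¬ (r ++ s).Pairwise (· ≤ ·)) := by
  induction w with
  | nil => simp [runs]
  | cons a l ih =>
    rw [runs]
    split <;> rename_i h <;> rw [h] at ih
    · simp
    · exact absurd rfl (ne_nil_and_pairwise_of_mem_runs (h ▸ List.mem_cons_self)).1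
    · split <;> rename_i hab
      · cases ih with
        | singleton => simp
        | cons_cons hbs hrs =>
          refine List.IsChain.cons_cons (fun hs => hbs ?_) hrs
          exact (List.pairwise_cons.1 hs).2
      · exact List.IsChain.cons_cons (by simp [hab]) ih

lemma runs_of_pairwise (hA : A ≠ []) (h : A.Pairwise (· ≤ ·)) : runs A = [A] := by
  induction A with
  | nil => exact absurd rfl hA
  | cons a l ih =>
    rcases l with _ | ⟨b, t⟩
    · rfl
    · rw [List.pairwise_cons] at h
      rw [runs, ih (List.cons_ne_nil _ _) h.2]
      simp [h.1 b List.mem_cons_self]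

lemma runs_append (hA : A ≠ []) (sA : A.Pairwise (· ≤ ·)) (sB : B.Pairwise (· ≤ ·))
    (hAB : ¬ (A ++ B).Pairwise (· ≤ ·)) : runs (A ++ B) = [A, B] := by
  induction A with
  | nil => exact absurd rfl hA
  | cons a l ih =>
    rcases l with _ | ⟨c, t⟩
    · rcases B with _ | ⟨b, u⟩
      · simp_all
      · rw [List.singleton_append, runs, runs_of_pairwise (List.cons_ne_nil _ _) sB]
        have hba : ¬ a ≤ b := fun hab => hAB (pairwise_cons_cons_of_le hab sB)
        simp [hba]
    · rw [List.pairwise_cons] at sA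
      have hac : a ≤ c := sA.1 c List.mem_cons_self
      have hc : ¬ ((c :: t) ++ B).Pairwise (· ≤ ·) := fun h =>
        hAB (pairwise_cons_cons_of_le hac h)
      rw [List.cons_append, runs, ih (List.cons_ne_nil _ _) sA.2 hc]
      simp [hac]

lemma runs_eq_pair_iff : runs w = [A, B] ↔
    w = A ++ B ∧ A ≠ [] ∧ A.Pairwise (· ≤ ·) ∧ B.Pairwise (· ≤ ·) ∧
      ¬ (A ++ B).Pairwise (· ≤ ·) := by
  constructor
  · intro h
    have hA := ne_nil_and_pairwise_of_mem_runs (h ▸ List.mem_cons_self : A ∈ runs w)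
    have hB := ne_nil_and_pairwise_of_mem_runs (h ▸ by simp : B ∈ runs w)
    have hAB := isChain_runs w
    rw [h, List.isChain_pair] at hAB
    exact ⟨by simpa [h] using (flatten_runs w).symm, hA.1, hA.2, hB.2, hAB⟩
  · rintro ⟨rfl, hA, sA, sB, hAB⟩
    exact runs_append hA sA sB hAB

end Runs

section SplitWord

variable {α : Type*} [LinearOrder α] {a : α} {s t β : Multiset α}

lemma sort_coe_of_pairwise {A : List α} (h : A.Pairwise (· ≤ ·)) : (A : Multiset α).sort = A :=
  List.mergeSort_eq_self _ h

def splitWord (s β : Multiset α) : List α := (s - β).sort ++ β.sort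

lemma coe_splitWord (h : β ≤ s) : (splitWord s β : Multiset α) = s := by
  rw [splitWord, ← Multiset.coe_add, Multiset.sort_eq, Multiset.sort_eq, tsub_add_cancel_of_le h]

lemma sort_ne_nil_of_not_pairwise_splitWord (h : ¬ (splitWord s β).Pairwise (· ≤ ·)) :
    (s - β).sort ≠ [] ∧ β.sort ≠ [] := by
  constructor <;> intro hnil <;> apply h <;> rw [splitWord, hnil]
  · exact Multiset.pairwise_sort _ _
  · simp

lemma pairwise_splitWord_iff (hβ : β ≤ s) :
    (splitWord s β).Pairwise (· ≤ ·) ↔ ∃ k ≤ Multiset.card s, β = ↑(s.sort.drop k) := by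
  constructor
  · intro h
    have hs : s.sort = splitWord s β := by
      conv_lhs => rw [← coe_splitWord hβ]
      exact sort_coe_of_pairwise h
    refine ⟨(s - β).sort.length, ?_, ?_⟩
    · rw [Multiset.length_sort]
      exact Multiset.card_le_card tsub_le_self
    rw [hs, splitWord, List.drop_left, Multiset.sort_eq]
  · rintro ⟨k, -, rfl⟩
    have hsub : s - ↑(s.sort.drop k) = ↑(s.sort.take k) := by
      have hs : s = ↑(s.sort.take k) + ↑(s.sort.drop k) := by
        rw [Multiset.coe_add, List.take_append_drop, Multiset.sort_eq]
      nth_rw 1 [hs]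
      exact add_tsub_cancel_right _ _
    have hs := Multiset.pairwise_sort s (· ≤ ·)
    rw [splitWord, hsub, sort_coe_of_pairwise (hs.sublist (List.take_sublist _ _)),
      sort_coe_of_pairwise (hs.sublist (List.drop_sublist _ _)), List.take_append_drop]
    exact hs

lemma splitWord_cons (ha : ∀ x ∈ t, a ≤ x) (hβ : β ≤ t) :
    splitWord (a ::ₘ t) β = a :: splitWord t β := by
  rw [splitWord, Multiset.cons_sub_of_le _ hβ,
    Multiset.sort_cons _ _ _ fun x hx => ha x (Multiset.mem_of_le tsub_le_self hx)]
  rfl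

lemma pairwise_splitWord_cons_iff (ha : ∀ x ∈ t, a ≤ x) (hβ : β ≤ t) :
    (splitWord (a ::ₘ t) β).Pairwise (· ≤ ·) ↔ (splitWord t β).Pairwise (· ≤ ·) := by
  rw [splitWord_cons ha hβ, List.pairwise_cons]
  refine and_iff_right fun x hx => ha x ?_
  rwa [← Multiset.mem_coe, coe_splitWord hβ] at hx

lemma le_of_sort_eq_cons {x z : α} {L : List α} (h : s.sort = x :: L)
    (hz : z ∈ s) : x ≤ z := by
  have hs := Multiset.pairwise_sort s (· ≤ ·)
  rw [← Multiset.mem_sort (· ≤ ·), h] at hz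
  rw [h] at hs
  rcases List.mem_cons.1 hz with rfl | hz
  · exact le_rfl
  · exact List.rel_of_pairwise_cons hs hz

lemma card_Iic_cons_of_nodup {u : Multiset α} (hu : u.Nodup) (ha : a ∈ u) :
    #(Iic (a ::ₘ u)) = 3 * 2 ^ (Multiset.card u - 1) := by
  have ha' : a ∈ u.toFinset := Multiset.mem_toFinset.2 ha
  rw [Multiset.card_Iic, Multiset.toFinset_cons, insert_eq_of_mem ha', ← mul_prod_erase _ _ ha',
    Multiset.count_cons_self, Multiset.count_eq_one_of_mem hu ha, prod_congr rfl (g := fun _ => 2),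
    prod_const, card_erase_of_mem ha', Multiset.toFinset_card_of_nodup hu]
  intro x hx
  rw [mem_erase, Multiset.mem_toFinset] at hx
  rw [Multiset.count_cons_of_ne hx.1, Multiset.count_eq_one_of_mem hu hx.2]

lemma filter_pairwise_splitWord_Iic (s : Multiset α) :
    {β ∈ Iic s | (splitWord s β).Pairwise (· ≤ ·)} =
      (range (Multiset.card s + 1)).image fun k => ↑(s.sort.drop k) := by
  ext β
  simp only [mem_filter, mem_Iic, mem_image, mem_range, Nat.lt_succ_iff]
  constructor
  · rintro ⟨hβ, h⟩
    obtain ⟨k, hk, rfl⟩ := (pairwise_splitWord_iff hβ).1 h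
    exact ⟨k, hk, rfl⟩
  · rintro ⟨k, hk, rfl⟩
    have hβ : ↑(s.sort.drop k) ≤ s := by
      conv_rhs => rw [← Multiset.sort_eq s (· ≤ ·)]
      exact Multiset.coe_le.2 (List.drop_sublist _ _).subperm
    exact ⟨hβ, (pairwise_splitWord_iff hβ).2 ⟨k, hk, rfl⟩⟩

lemma card_filter_not_pairwise_splitWord_Iic (s : Multiset α) :
    #{β ∈ Iic s | ¬ (splitWord s β).Pairwise (· ≤ ·)} = #(Iic s) - (Multiset.card s + 1) := by
  have hinj : Set.InjOn (fun k => (↑(s.sort.drop k) : Multiset α))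
      ↑(range (Multiset.card s + 1)) := by
    intro k hk k' hk' h
    have := congrArg Multiset.card h
    simp only [coe_range, Set.mem_Iio, Multiset.coe_card, List.length_drop,
      Multiset.length_sort] at hk hk' this
    omega
  have hsplit := card_filter_add_card_filter_not (s := Iic s)
    (fun β => (splitWord s β).Pairwise (· ≤ ·))
  rw [filter_pairwise_splitWord_Iic, card_image_of_injOn hinj, card_range] at hsplit
  omega

end SplitWord

section TwoRuns

variable {a : ℕ} {s t β : Multiset ℕ}

lemma runs_splitWord (h : ¬ (splitWord s β).Pairwise (· ≤ ·)) :
    runs (splitWord s β) = [(s - β).sort, β.sort] := by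
  refine runs_eq_pair_iff.2 ⟨rfl, fun hnil => h ?_, Multiset.pairwise_sort _ _,
    Multiset.pairwise_sort _ _, h⟩
  rw [splitWord, hnil, List.nil_append]
  exact Multiset.pairwise_sort _ _

lemma injOn_splitWord (s : Multiset ℕ) :
    Set.InjOn (splitWord s) {β | ¬ (splitWord s β).Pairwise (· ≤ ·)} := by
  intro β hβ β' hβ' heq
  have hsort := congrArg runs heq
  simp only [runs_splitWord hβ, runs_splitWord hβ', List.cons.injEq, and_true] at hsort
  rw [← Multiset.sort_eq β (· ≤ ·), hsort.2, Multiset.sort_eq]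

lemma coe_eq_and_numRuns_eq_two_iff {w : List ℕ} :
    (↑w = s ∧ numRuns w = 2) ↔
      ∃ β ≤ s, ¬ (splitWord s β).Pairwise (· ≤ ·) ∧ splitWord s β = w := by
  constructor
  · rintro ⟨rfl, hw⟩
    obtain ⟨A, B, hAB⟩ := List.length_eq_two.1 hw
    obtain ⟨rfl, -, sA, sB, hnot⟩ := runs_eq_pair_iff.1 hAB
    have hsplit : splitWord ↑(A ++ B) ↑B = A ++ B := by
      rw [splitWord, ← Multiset.coe_add, add_tsub_cancel_right, sort_coe_of_pairwise sA,
        sort_coe_of_pairwise sB]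
    refine ⟨↑B, ?_, by rwa [hsplit], hsplit⟩
    rw [← Multiset.coe_add]
    exact le_add_self
  · rintro ⟨β, hβ, hnot, rfl⟩
    exact ⟨coe_splitWord hβ, by rw [numRuns, runs_splitWord hnot]; rfl⟩

lemma isFlattened_splitWord_cons_iff (ha : ∀ x ∈ t, a < x) (hβ : β ≤ a ::ₘ t)
    (h : ¬ (splitWord (a ::ₘ t) β).Pairwise (· ≤ ·)) :
    IsFlattened (splitWord (a ::ₘ t) β) ↔ a ∉ β := by
  obtain ⟨hA, hB⟩ := sort_ne_nil_of_not_pairwise_splitWord h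
  obtain ⟨x, A, hxA⟩ := List.exists_cons_of_ne_nil hA
  obtain ⟨y, B, hyB⟩ := List.exists_cons_of_ne_nil hB
  have hx : x ∈ a ::ₘ t - β := by
    rw [← Multiset.mem_sort (· ≤ ·), hxA]
    exact List.mem_cons_self
  have hy : y ∈ β := by
    rw [← Multiset.mem_sort (· ≤ ·), hyB]
    exact List.mem_cons_self
  have hat : a ∉ t := fun hat => lt_irrefl a (ha a hat)
  have ha_sub : a ∈ a ::ₘ t - β ↔ a ∉ β := by
    rw [← Multiset.count_pos, Multiset.count_sub, Multiset.count_cons_self,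
      Multiset.count_eq_zero_of_notMem hat, ← Multiset.count_eq_zero]
    omega
  rw [IsFlattened, List.Chain', runs_splitWord h, hxA, hyB]
  simp only [List.map_cons, List.map_nil, List.isChain_pair, List.headD_cons]
  constructor
  · intro hxy haβ
    have hxt : x ∈ t := by
      refine (Multiset.mem_cons.1 (Multiset.mem_of_le tsub_le_self hx)).resolve_left ?_
      rintro rfl
      exact ha_sub.1 hx haβ
    have hya : y ≤ a := le_of_sort_eq_cons hyB haβ
    have := ha x hxt
    omega
  · intro haβ
    have hxa : x ≤ a := le_of_sort_eq_cons hxA (ha_sub.2 haβ)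
    have hyt : y ∈ t := by
      refine (Multiset.mem_cons.1 (Multiset.mem_of_le hβ hy)).resolve_left ?_
      rintro rfl
      exact haβ hy
    have := ha y hyt
    omega

end TwoRuns

lemma isInsertion_iff {S : Multiset ℕ} {n : ℕ} {w : List ℕ} :
    IsInsertion S n w ↔ (↑w : Multiset ℕ) = ↑(List.range' 1 n) + S := by
  refine ⟨And.left, fun h => ⟨h, ?_⟩⟩
  have hle : (↑(List.range' 1 n) : Multiset ℕ) ≤ ↑w := h ▸ le_self_add
  obtain ⟨p, hp, hpw⟩ := Multiset.coe_le.1 hle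
  exact ⟨p, hp, hpw⟩

lemma flatInsK_two_eq_image {S : Multiset ℕ} {n a : ℕ} {t : Multiset ℕ}
    (hS : ↑(List.range' 1 n) + S = a ::ₘ t) (ha : ∀ x ∈ t, a < x) :
    flatInsK S n 2 =
      splitWord (a ::ₘ t) '' {β | β ≤ t ∧ ¬ (splitWord t β).Pairwise (· ≤ ·)} := by
  ext w
  simp only [flatInsK, Set.mem_ofPred_eq, Set.mem_image, isInsertion_iff, hS]
  constructor
  · rintro ⟨hw, hflat, hruns⟩
    obtain ⟨β, hβ, hnot, rfl⟩ := coe_eq_and_numRuns_eq_two_iff.1 ⟨hw, hruns⟩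
    have hβt := (Multiset.le_cons_of_notMem
      ((isFlattened_splitWord_cons_iff ha hβ hnot).1 hflat)).1 hβ
    exact ⟨β, ⟨hβt, (pairwise_splitWord_cons_iff (fun x hx => (ha x hx).le) hβt).not.1 hnot⟩,
      rfl⟩
  · rintro ⟨β, ⟨hβt, hnot⟩, rfl⟩
    have hβ : β ≤ a ::ₘ t := hβt.trans (Multiset.le_cons_self _ _)
    have hnot' := (pairwise_splitWord_cons_iff (fun x hx => (ha x hx).le) hβt).not.2 hnot
    obtain ⟨hw, hruns⟩ := coe_eq_and_numRuns_eq_two_iff.2 ⟨β, hβ, hnot', rfl⟩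
    refine ⟨hw, (isFlattened_splitWord_cons_iff ha hβ hnot').2 fun haβ => ?_, hruns⟩
    exact lt_irrefl a (ha a (Multiset.mem_of_le hβt haβ))

lemma ncard_flatInsK_two {S : Multiset ℕ} {n a : ℕ} {t : Multiset ℕ}
    (hS : ↑(List.range' 1 n) + S = a ::ₘ t) (ha : ∀ x ∈ t, a < x) :
    (flatInsK S n 2).ncard = #(Finset.Iic t) - (Multiset.card t + 1) := by
  have hinj : Set.InjOn (splitWord (a ::ₘ t))
      {β | β ≤ t ∧ ¬ (splitWord t β).Pairwise (· ≤ ·)} :=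
    (injOn_splitWord (a ::ₘ t)).mono fun β hβ =>
      (pairwise_splitWord_cons_iff (fun x hx => (ha x hx).le) hβ.1).not.2 hβ.2
  rw [flatInsK_two_eq_image hS ha, hinj.ncard_image,
    ← card_filter_not_pairwise_splitWord_Iic, ← Set.ncard_coe_finset]
  simp

lemma sum_range_two_pow_mul_add (m : ℕ) :
    ∑ i ∈ Finset.range m, 2 ^ i * (m + 1 - i) + (m + 3) = 3 * 2 ^ m := by
  induction m with
  | zero => simp
  | succ m ih =>
    have hshift : ∀ i ∈ Finset.range m, 2 ^ (i + 1) * (m + 1 + 1 - (i + 1)) =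
        2 * (2 ^ i * (m + 1 - i)) := fun i _ => by
      rw [pow_succ, Nat.add_sub_add_right]; ring
    rw [Finset.sum_range_succ', Finset.sum_congr rfl hshift, ← Finset.mul_sum, pow_succ]
    omega

end FlatPF

open FlatPF in
theorem stmt8_general (n l : ℕ) (hl : 2 ≤ l) (hln : l ≤ n) :
    fS {l} n 2 = ∑ i ∈ Finset.range (n - 2), 2 ^ i * (n - 1 - i) := by
  obtain ⟨m, rfl⟩ : ∃ m, n = m + 2 := ⟨n - 2, by omega⟩
  have hl_mem : l ∈ (↑(List.range' 2 (m + 1)) : Multiset ℕ) :=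
    List.mem_range'_1.2 ⟨hl, by omega⟩
  have hS : ↑(List.range' 1 (m + 2)) + {l} = 1 ::ₘ l ::ₘ ↑(List.range' 2 (m + 1)) := by
    rw [show List.range' 1 (m + 2) = 1 :: List.range' 2 (m + 1) from rfl, ← Multiset.cons_coe,
      Multiset.cons_add, add_comm, Multiset.singleton_add]
  have hgt : ∀ x ∈ l ::ₘ ↑(List.range' 2 (m + 1)), 1 < x := by
    simp only [Multiset.mem_cons, Multiset.mem_coe, List.mem_range'_1]
    omega
  have hsum := sum_range_two_pow_mul_add m
  rw [fS, ncard_flatInsK_two hS hgt,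
    card_Iic_cons_of_nodup (Multiset.coe_nodup.2 List.nodup_range') hl_mem]
  simp only [Multiset.card_cons, Multiset.coe_card, List.length_range', Nat.add_sub_cancel]
  rw [Finset.sum_congr rfl fun i _ => by rw [show m + 2 - 1 - i = m + 1 - i by omega]]
  omega

open FlatPF in
/-- For `n ≥ 3` and `2 ≤ l ≤ n`, the number of flattened `{l}`-insertion parking
functions of order `n` with exactly two runs is `∑_{i=0}^{n-3} 2^i (n-1-i)`. -/
theorem stmt8 (n l : ℕ) (hn : 3 ≤ n) (hl : 2 ≤ l) (hln : l ≤ n) :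
    fS {l} n 2 = ∑ i ∈ Finset.range (n - 2), 2 ^ i * (n - 1 - i) :=
  stmt8_general n l hl hln
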